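/- arXiv:2102.03730 — 7 statements merged into one kernel-verified Lean document; each statement's English description precedes it below -/
import Mathlib

section
/- Let C be a graded classical 2-absorbing second submodule of M and let I = ⊕_{γ∈G} I_γ be a graded ideal of R. Then for every r, s ∈ h(R), every γ ∈ G, and every completely graded irreducible submodule U of M with r·s·I_γ·C ⊆ U, either r·I_γ·C ⊆ U or s·I_γ·C ⊆ U or r·s·C ⊆ U. -/
open Pointwise

section GradedDefs

variable {G : Type*} [Group G] [DecidableEq G] {R : Type*} [CommRing R]
  {M : Type*} [AddCommGroup M] [Module R M]

/-- `R` is a `G`-graded commutative ring via the additive subgroups `𝒜 α`: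
`R_α R_β ⊆ R_{αβ}` and `R = ⊕_{α ∈ G} R_α`. -/
structure IsRingGrading (𝒜 : G → AddSubgroup R) : Prop where
  one_mem : (1 : R) ∈ 𝒜 1
  mul_mem : ∀ ⦃α β : G⦄ ⦃r s : R⦄, r ∈ 𝒜 α → s ∈ 𝒜 β → r * s ∈ 𝒜 (α * β)
  isInternal : DirectSum.IsInternal 𝒜

/-- `M` is a graded module over the `G`-graded ring `R`:
`R_α M_β ⊆ M_{αβ}` and `M = ⊕_{α ∈ G} M_α`. -/
structure IsModuleGrading (𝒜 : G → AddSubgroup R) (ℳ : G → AddSubgroup M) : Prop where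
  smul_mem : ∀ ⦃α β : G⦄ ⦃r : R⦄ ⦃m : M⦄, r ∈ 𝒜 α → m ∈ ℳ β → r • m ∈ ℳ (α * β)
  isInternal : DirectSum.IsInternal ℳ

/-- A submodule `N` of `M` is a graded submodule iff `N = ⊕_{α ∈ G} (N ∩ M_α)`,
equivalently, every element of `N` is a sum of homogeneous elements of `N`. -/
def IsGradedSubmodule (ℳ : G → AddSubgroup M) (N : Submodule R M) : Prop :=
  ∀ n ∈ N, n ∈ Submodule.span R {m : M | m ∈ N ∧ ∃ α, m ∈ ℳ α}

/-- An ideal `I` of `R` is a graded ideal iff `I = ⊕_{α ∈ G} (I ∩ R_α)`. -/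
def IsGradedIdeal (𝒜 : G → AddSubgroup R) (I : Ideal R) : Prop :=
  ∀ r ∈ I, r ∈ Ideal.span {s : R | s ∈ I ∧ ∃ α, s ∈ 𝒜 α}

/-- A proper graded submodule `C` of `M` is completely graded irreducible if whenever
`C = ⋂_{λ ∈ Δ} C_λ` for a family of graded submodules `C_λ`, then `C = C_β` for some `β`. -/
def CompletelyGradedIrreducible (ℳ : G → AddSubgroup M) (C : Submodule R M) : Prop :=
  IsGradedSubmodule ℳ C ∧ C ≠ ⊤ ∧
    ∀ S : Set (Submodule R M), (∀ D ∈ S, IsGradedSubmodule ℳ D) → C = sInf S → C ∈ S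

/-- A non-zero graded submodule `C` of `M` is a graded classical 2-absorbing second submodule
if whenever `r, s, t ∈ h(R)`, `U` is a completely graded irreducible submodule of `M` and
`r·s·t·C ⊆ U`, then `r·s·C ⊆ U` or `s·t·C ⊆ U` or `r·t·C ⊆ U`. -/
def IsGrClassical2AbsorbingSecond (𝒜 : G → AddSubgroup R) (ℳ : G → AddSubgroup M)
    (C : Submodule R M) : Prop :=
  C ≠ ⊥ ∧ IsGradedSubmodule ℳ C ∧
    ∀ r s t : R, (∃ α, r ∈ 𝒜 α) → (∃ β, s ∈ 𝒜 β) → (∃ γ, t ∈ 𝒜 γ) →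
      ∀ U : Submodule R M, CompletelyGradedIrreducible ℳ U →
        r • s • t • C ≤ U → (r • s • C ≤ U ∨ s • t • C ≤ U ∨ r • t • C ≤ U)

/-- A non-zero graded submodule `C` of `M` is a graded strongly classical 2-absorbing second
submodule if whenever `r, s, t ∈ h(R)`, `U₁, U₂, U₃` are completely graded irreducible
submodules of `M` and `r·s·t·C ⊆ U₁ ∩ U₂ ∩ U₃`, then `r·s·C ⊆ U₁ ∩ U₂ ∩ U₃` or
`s·t·C ⊆ U₁ ∩ U₂ ∩ U₃` or `r·t·C ⊆ U₁ ∩ U₂ ∩ U₃`. -/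
def IsGrStronglyClassical2AbsorbingSecond (𝒜 : G → AddSubgroup R) (ℳ : G → AddSubgroup M)
    (C : Submodule R M) : Prop :=
  C ≠ ⊥ ∧ IsGradedSubmodule ℳ C ∧
    ∀ r s t : R, (∃ α, r ∈ 𝒜 α) → (∃ β, s ∈ 𝒜 β) → (∃ γ, t ∈ 𝒜 γ) →
      ∀ U₁ U₂ U₃ : Submodule R M, CompletelyGradedIrreducible ℳ U₁ →
        CompletelyGradedIrreducible ℳ U₂ → CompletelyGradedIrreducible ℳ U₃ →
        r • s • t • C ≤ U₁ ⊓ U₂ ⊓ U₃ →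
        (r • s • C ≤ U₁ ⊓ U₂ ⊓ U₃ ∨ s • t • C ≤ U₁ ⊓ U₂ ⊓ U₃ ∨ r • t • C ≤ U₁ ⊓ U₂ ⊓ U₃)

/-- A non-zero graded submodule `S` of `M` is a graded weakly second submodule if whenever
`r, s ∈ h(R)`, `N` is a graded submodule of `M` and `r·s·S ⊆ N`, then `r·S ⊆ N` or `s·S ⊆ N`. -/
def IsGrWeaklySecond (𝒜 : G → AddSubgroup R) (ℳ : G → AddSubgroup M)
    (S : Submodule R M) : Prop :=
  S ≠ ⊥ ∧ IsGradedSubmodule ℳ S ∧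
    ∀ r s : R, (∃ α, r ∈ 𝒜 α) → (∃ β, s ∈ 𝒜 β) →
      ∀ N : Submodule R M, IsGradedSubmodule ℳ N →
        r • s • S ≤ N → (r • S ≤ N ∨ s • S ≤ N)

/-- A proper graded ideal `I` of `R` is a graded 2-absorbing ideal if whenever `r, s, t ∈ h(R)`
with `r·s·t ∈ I`, then `r·s ∈ I` or `r·t ∈ I` or `s·t ∈ I`. -/
def IsGr2AbsorbingIdeal (𝒜 : G → AddSubgroup R) (I : Ideal R) : Prop :=
  I ≠ ⊤ ∧ IsGradedIdeal 𝒜 I ∧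
    ∀ r s t : R, (∃ α, r ∈ 𝒜 α) → (∃ β, s ∈ 𝒜 β) → (∃ γ, t ∈ 𝒜 γ) →
      r * s * t ∈ I → (r * s ∈ I ∨ r * t ∈ I ∨ s * t ∈ I)

end GradedDefs

/-!
For homogeneous `a` of degree `γ` in `I`, the classical 2-absorbing property together with
`r·s·C ⊄ U` puts `a` into one of the colon ideals `(U : r·C)` or `(U : s·C)`. So the additive
group `I_γ` is covered by two additive subgroups, hence lies in one of them.
-/

section Colon

variable {R M : Type*} [CommRing R] [AddCommGroup M] [Module R M]

theorem Submodule.smul_smul_le_iff_mem_colon {r a : R} {C U : Submodule R M} :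
    r • a • C ≤ U ↔ a ∈ U.colon (r • C : Submodule R M) := by
  rw [Submodule.mem_colon_iff_le, smul_smul, smul_smul, mul_comm]

theorem Submodule.forall_or_forall_of_smul_smul_le {T : AddSubgroup R} {r s : R}
    {C U : Submodule R M} (h : ∀ a ∈ T, r • a • C ≤ U ∨ s • a • C ≤ U) :
    (∀ a ∈ T, r • a • C ≤ U) ∨ (∀ a ∈ T, s • a • C ≤ U) := by
  simp only [smul_smul_le_iff_mem_colon] at h ⊢
  exact AddSubgroupClass.subset_union (H := T)
    (K := (U.colon (r • C : Submodule R M)).toAddSubgroup)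
    (L := (U.colon (s • C : Submodule R M)).toAddSubgroup) |>.mp h

end Colon

theorem stmt0_general {G : Type*} [Group G] {R : Type*} [CommRing R]
    {M : Type*} [AddCommGroup M] [Module R M]
    (𝒜 : G → AddSubgroup R) (ℳ : G → AddSubgroup M)
    (C : Submodule R M) (hC : IsGrClassical2AbsorbingSecond 𝒜 ℳ C)
    (I : Ideal R)
    (r s : R) (hr : ∃ α, r ∈ 𝒜 α) (hs : ∃ β, s ∈ 𝒜 β) (γ : G)
    (U : Submodule R M) (hU : CompletelyGradedIrreducible ℳ U)
    (hsub : ∀ a : R, a ∈ I → a ∈ 𝒜 γ → r • s • a • C ≤ U) :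
    (∀ a : R, a ∈ I → a ∈ 𝒜 γ → r • a • C ≤ U) ∨
      (∀ a : R, a ∈ I → a ∈ 𝒜 γ → s • a • C ≤ U) ∨ r • s • C ≤ U := by
  by_cases hrs : r • s • C ≤ U
  · exact Or.inr (Or.inr hrs)
  have hcover : ∀ a ∈ I.toAddSubgroup ⊓ 𝒜 γ, r • a • C ≤ U ∨ s • a • C ≤ U := by
    rintro a ⟨haI, haγ⟩
    rcases hC.2.2 r s a hr hs ⟨γ, haγ⟩ U hU (hsub a haI haγ) with h | h | h
    · exact absurd h hrs
    · exact Or.inr h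
    · exact Or.inl h
  rcases Submodule.forall_or_forall_of_smul_smul_le hcover with h | h
  · exact Or.inl fun a haI haγ => h a ⟨haI, haγ⟩
  · exact Or.inr (Or.inl fun a haI haγ => h a ⟨haI, haγ⟩)

theorem stmt0 {G : Type*} [Group G] [DecidableEq G] {R : Type*} [CommRing R]
    {M : Type*} [AddCommGroup M] [Module R M]
    (𝒜 : G → AddSubgroup R) (ℳ : G → AddSubgroup M)
    (h𝒜 : IsRingGrading 𝒜) (hℳ : IsModuleGrading 𝒜 ℳ)
    (C : Submodule R M) (hC : IsGrClassical2AbsorbingSecond 𝒜 ℳ C)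
    (I : Ideal R) (hI : IsGradedIdeal 𝒜 I)
    (r s : R) (hr : ∃ α, r ∈ 𝒜 α) (hs : ∃ β, s ∈ 𝒜 β) (γ : G)
    (U : Submodule R M) (hU : CompletelyGradedIrreducible ℳ U)
    (hsub : ∀ a : R, a ∈ I → a ∈ 𝒜 γ → r • s • a • C ≤ U) :
    (∀ a : R, a ∈ I → a ∈ 𝒜 γ → r • a • C ≤ U) ∨
      (∀ a : R, a ∈ I → a ∈ 𝒜 γ → s • a • C ≤ U) ∨ r • s • C ≤ U :=
  stmt0_general 𝒜 ℳ C hC I r s hr hs γ U hU hsub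
end

section
/- Let C be a graded classical 2-absorbing second submodule of M and let I = ⊕_{β∈G} I_β and J = ⊕_{γ∈G} J_γ be graded ideals of R. Then for every r ∈ h(R), every β, γ ∈ G, and every completely graded irreducible submodule U of M with r·I_β·J_γ·C ⊆ U, either r·I_β·C ⊆ U or r·J_γ·C ⊆ U or I_β·J_γ·C ⊆ U. -/
open Pointwise

/-
For homogeneous `a ∈ I_β` and `b ∈ J_γ` the 2-absorbing property gives `r·a·C ⊆ U`, `r·b·C ⊆ U`
or `a·b·C ⊆ U`, i.e. `a ∈ K`, `b ∈ K` or `a·b ∈ L` for the colon ideals `K = (U : r·C)` and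
`L = (U : C)`. Since a group covered by two subgroups lies in one of them, such an elementwise
trichotomy between additive groups `I_β`, `J_γ` upgrades to one for the groups themselves.
-/

theorem AddSubgroup.le_or_le_or_forall_mul_mem {R : Type*} [NonUnitalNonAssocRing R]
    {A B K₁ K₂ L : AddSubgroup R} (h : ∀ a ∈ A, ∀ b ∈ B, a ∈ K₁ ∨ b ∈ K₂ ∨ a * b ∈ L) :
    A ≤ K₁ ∨ B ≤ K₂ ∨ ∀ a ∈ A, ∀ b ∈ B, a * b ∈ L := by
  refine or_iff_not_imp_left.2 fun hA ↦ or_iff_not_imp_left.2 fun hB ↦ ?_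
  have row : ∀ a ∈ A, a ∉ K₁ → B ≤ L.comap (AddMonoidHom.mulLeft a) := fun a ha haK ↦
    (AddSubgroupClass.subset_union.1 fun b hb ↦ (h a ha b hb).resolve_left haK).resolve_left hB
  have rows : A ≤ ⨅ b ∈ B, L.comap (AddMonoidHom.mulRight b) :=
    (AddSubgroupClass.subset_union.1 fun a ha ↦ or_iff_not_imp_left.2 fun haK ↦
      mem_iInf.2 fun b ↦ mem_iInf.2 fun hb ↦ row a ha haK hb).resolve_left hA
  exact fun a ha b hb ↦ mem_iInf.1 (mem_iInf.1 (rows ha) b) hb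

namespace Submodule

variable {R M : Type*} [CommRing R] [AddCommGroup M] [Module R M]

theorem smul_smul_le_iff_mul_mem_colon (a b : R) (C U : Submodule R M) :
    a • b • C ≤ U ↔ a * b ∈ U.colon C := by
  rw [mem_colon_iff_le, smul_smul]

theorem smul_smul_le_iff_mem_colon_smul (r a : R) (C U : Submodule R M) :
    r • a • C ≤ U ↔ a ∈ U.colon ↑(r • C) := by
  rw [mem_colon_iff_le, smul_comm]

end Submodule

theorem stmt1_general {G : Type*} [Group G] {R : Type*} [CommRing R]
    {M : Type*} [AddCommGroup M] [Module R M]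
    (𝒜 : G → AddSubgroup R) (ℳ : G → AddSubgroup M)
    (C : Submodule R M) (hC : IsGrClassical2AbsorbingSecond 𝒜 ℳ C)
    (I J : Ideal R)
    (r : R) (hr : ∃ α, r ∈ 𝒜 α) (β γ : G)
    (U : Submodule R M) (hU : CompletelyGradedIrreducible ℳ U)
    (hsub : ∀ a b : R, a ∈ I → a ∈ 𝒜 β → b ∈ J → b ∈ 𝒜 γ → r • a • b • C ≤ U) :
    (∀ a : R, a ∈ I → a ∈ 𝒜 β → r • a • C ≤ U) ∨
      (∀ b : R, b ∈ J → b ∈ 𝒜 γ → r • b • C ≤ U) ∨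
      (∀ a b : R, a ∈ I → a ∈ 𝒜 β → b ∈ J → b ∈ 𝒜 γ → a • b • C ≤ U) := by
  simp only [Submodule.smul_smul_le_iff_mem_colon_smul r, Submodule.smul_smul_le_iff_mul_mem_colon]
  have absorb : ∀ a ∈ I.toAddSubgroup ⊓ 𝒜 β, ∀ b ∈ J.toAddSubgroup ⊓ 𝒜 γ,
      a ∈ (U.colon ↑(r • C)).toAddSubgroup ∨ b ∈ (U.colon ↑(r • C)).toAddSubgroup ∨
        a * b ∈ (U.colon C).toAddSubgroup := by
    rintro a ⟨haI, haβ⟩ b ⟨hbJ, hbγ⟩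
    have habs := hC.2.2 r a b hr ⟨β, haβ⟩ ⟨γ, hbγ⟩ U hU (hsub a b haI haβ hbJ hbγ)
    simp only [Submodule.smul_smul_le_iff_mem_colon_smul r,
      Submodule.smul_smul_le_iff_mul_mem_colon] at habs
    exact habs.imp_right Or.symm
  rcases AddSubgroup.le_or_le_or_forall_mul_mem absorb with hA | hB | hAB
  · exact Or.inl fun a haI haβ ↦ hA ⟨haI, haβ⟩
  · exact Or.inr <| Or.inl fun b hbJ hbγ ↦ hB ⟨hbJ, hbγ⟩
  · exact Or.inr <| Or.inr fun a b haI haβ hbJ hbγ ↦ hAB a ⟨haI, haβ⟩ b ⟨hbJ, hbγ⟩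

theorem stmt1 {G : Type*} [Group G] [DecidableEq G] {R : Type*} [CommRing R]
    {M : Type*} [AddCommGroup M] [Module R M]
    (𝒜 : G → AddSubgroup R) (ℳ : G → AddSubgroup M)
    (h𝒜 : IsRingGrading 𝒜) (hℳ : IsModuleGrading 𝒜 ℳ)
    (C : Submodule R M) (hC : IsGrClassical2AbsorbingSecond 𝒜 ℳ C)
    (I J : Ideal R) (hI : IsGradedIdeal 𝒜 I) (hJ : IsGradedIdeal 𝒜 J)
    (r : R) (hr : ∃ α, r ∈ 𝒜 α) (β γ : G)
    (U : Submodule R M) (hU : CompletelyGradedIrreducible ℳ U)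
    (hsub : ∀ a b : R, a ∈ I → a ∈ 𝒜 β → b ∈ J → b ∈ 𝒜 γ → r • a • b • C ≤ U) :
    (∀ a : R, a ∈ I → a ∈ 𝒜 β → r • a • C ≤ U) ∨
      (∀ b : R, b ∈ J → b ∈ 𝒜 γ → r • b • C ≤ U) ∨
      (∀ a b : R, a ∈ I → a ∈ 𝒜 β → b ∈ J → b ∈ 𝒜 γ → a • b • C ≤ U) :=
  stmt1_general 𝒜 ℳ C hC I J r hr β γ U hU hsub
end

section
/- Let C be a non-zero graded submodule of M. Then C is a graded classical 2-absorbing second submodule of M if and only if for all graded ideals I = ⊕_{α∈G} I_α, J = ⊕_{β∈G} J_β, K = ⊕_{γ∈G} K_γ of R, all α, β, γ ∈ G, and every completely graded irreducible submodule U of M with I_α·J_β·K_γ·C ⊆ U, either J_β·K_γ·C ⊆ U or I_α·J_β·C ⊆ U or I_α·K_γ·C ⊆ U. -/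
open Pointwise

/-! With `T = (U : C)`, the inclusion `r • s • t • C ≤ U` says `r * s * t ∈ T`, so both sides
are statements about products landing in `T`. Passing from elements to the homogeneous parts
`I_α, J_β, K_γ` rests on the fact that an additive group is never the union of two proper
subgroups: if `a * b ∉ T`, then `K_γ` is covered by the subgroups `{c | a * c ∈ T}` and
`{c | b * c ∈ T}`, hence lies in one of them; the same argument, run over `b ∈ J_β` and then over
`a ∈ I_α`, gives the uniform statement. Conversely, a homogeneous element generates a graded
principal ideal, to which the ideal-theoretic condition applies. -/

namespace AddSubgroup

variable {R : Type*} [NonUnitalCommRing R]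

def colon (T : AddSubgroup R) (X : Set R) : AddSubgroup R where
  carrier := {y | ∀ x ∈ X, y * x ∈ T}
  zero_mem' x _ := by simp
  add_mem' hy hz x hx := by simpa only [add_mul] using T.add_mem (hy x hx) (hz x hx)
  neg_mem' hy x hx := by simpa only [neg_mul] using T.neg_mem (hy x hx)

@[simp]
theorem mem_colon {T : AddSubgroup R} {X : Set R} {y : R} :
    y ∈ T.colon X ↔ ∀ x ∈ X, y * x ∈ T :=
  Iff.rfl

variable {T A B K : AddSubgroup R}

theorem le_colon_singleton_or_le_colon_singleton_of_forall_mul_mem_or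
    (h : ∀ a ∈ A, ∀ b ∈ B, ∀ c ∈ K, a * b ∈ T ∨ b * c ∈ T ∨ a * c ∈ T)
    {a b : R} (ha : a ∈ A) (hb : b ∈ B) (hab : a * b ∉ T) :
    K ≤ T.colon {a} ∨ K ≤ T.colon {b} := by
  refine AddSubgroupClass.subset_union.mp fun c hc => ?_
  simp only [Set.mem_union, SetLike.mem_coe, mem_colon, Set.mem_singleton_iff, forall_eq,
    mul_comm c]
  exact ((h a ha b hb c hc).resolve_left hab).symm

theorem le_colon_or_le_colon_singleton_of_forall_mul_mem_or
    (h : ∀ a ∈ A, ∀ b ∈ B, ∀ c ∈ K, a * b ∈ T ∨ b * c ∈ T ∨ a * c ∈ T)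
    {a : R} (ha : a ∈ A) :
    B ≤ T.colon K ∨ B ≤ T.colon {a} ∨ K ≤ T.colon {a} := by
  by_cases hK : K ≤ T.colon {a}
  · exact .inr (.inr hK)
  refine or_assoc.mp (.inl <| or_comm.mp <| AddSubgroupClass.subset_union.mp fun b hb => ?_)
  by_cases hab : a * b ∈ T
  · exact .inl (by simpa [mul_comm b] using hab)
  refine .inr fun c hc => ?_
  have hKb :=
    (le_colon_singleton_or_le_colon_singleton_of_forall_mul_mem_or h ha hb hab).resolve_left hK
  simpa [mul_comm b] using hKb hc

theorem forall_mul_mem_or_of_forall_mul_mem_or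
    (h : ∀ a ∈ A, ∀ b ∈ B, ∀ c ∈ K, a * b ∈ T ∨ b * c ∈ T ∨ a * c ∈ T) :
    (∀ b ∈ B, ∀ c ∈ K, b * c ∈ T) ∨ (∀ a ∈ A, ∀ b ∈ B, a * b ∈ T) ∨
      (∀ a ∈ A, ∀ c ∈ K, a * c ∈ T) := by
  by_cases hBK : B ≤ T.colon K
  · exact .inl hBK
  suffices A ≤ T.colon B ∨ A ≤ T.colon K from .inr this
  refine AddSubgroupClass.subset_union.mp fun a ha => ?_
  rcases le_colon_or_le_colon_singleton_of_forall_mul_mem_or h ha with hB | hB | hK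
  · exact absurd hB hBK
  · exact .inl fun b hb => by simpa [mul_comm a] using hB hb
  · exact .inr fun c hc => by simpa [mul_comm a] using hK hc

end AddSubgroup

theorem isGradedIdeal_span_singleton {G R : Type*} [CommRing R] {𝒜 : G → AddSubgroup R}
    {x : R} {α : G} (hx : x ∈ 𝒜 α) : IsGradedIdeal 𝒜 (Ideal.span {x}) := by
  intro y hy
  refine Ideal.span_mono ?_ hy
  exact Set.singleton_subset_iff.mpr ⟨Ideal.mem_span_singleton_self x, α, hx⟩

theorem Submodule.smul_smul_le_iff_mul_mem_colon_s2 {R M : Type*} [CommRing R] [AddCommGroup M]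
    [Module R M] {C U : Submodule R M} {r s : R} : r • s • C ≤ U ↔ r * s ∈ U.colon C := by
  rw [smul_smul, Submodule.mem_colon_iff_le]

theorem stmt2_general {G : Type*} {R : Type*} [CommRing R]
    {M : Type*} [AddCommGroup M] [Module R M]
    (𝒜 : G → AddSubgroup R) (ℳ : G → AddSubgroup M)
    (C : Submodule R M) (hC0 : C ≠ ⊥) (hCgr : IsGradedSubmodule ℳ C) :
    IsGrClassical2AbsorbingSecond 𝒜 ℳ C ↔
      ∀ I J K : Ideal R, IsGradedIdeal 𝒜 I → IsGradedIdeal 𝒜 J → IsGradedIdeal 𝒜 K →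
        ∀ (α β γ : G) (U : Submodule R M), CompletelyGradedIrreducible ℳ U →
          (∀ a b c : R, a ∈ I → a ∈ 𝒜 α → b ∈ J → b ∈ 𝒜 β → c ∈ K → c ∈ 𝒜 γ →
            a • b • c • C ≤ U) →
          ((∀ b c : R, b ∈ J → b ∈ 𝒜 β → c ∈ K → c ∈ 𝒜 γ → b • c • C ≤ U) ∨
            (∀ a b : R, a ∈ I → a ∈ 𝒜 α → b ∈ J → b ∈ 𝒜 β → a • b • C ≤ U) ∨
            (∀ a c : R, a ∈ I → a ∈ 𝒜 α → c ∈ K → c ∈ 𝒜 γ → a • c • C ≤ U)) := by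
  constructor
  · rintro ⟨-, -, habsorb⟩ I J K - - - α β γ U hU hIJK
    have key := AddSubgroup.forall_mul_mem_or_of_forall_mul_mem_or
      (T := (U.colon C).toAddSubgroup) (A := I.toAddSubgroup ⊓ 𝒜 α)
      (B := J.toAddSubgroup ⊓ 𝒜 β) (K := K.toAddSubgroup ⊓ 𝒜 γ) ?_
    · simp only [Submodule.smul_smul_le_iff_mul_mem_colon_s2]
      rcases key with hJK | hIJ | hIK
      · exact .inl fun b c hb hbβ hc hcγ => hJK b ⟨hb, hbβ⟩ c ⟨hc, hcγ⟩
      · exact .inr <| .inl fun a b ha haα hb hbβ => hIJ a ⟨ha, haα⟩ b ⟨hb, hbβ⟩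
      · exact .inr <| .inr fun a c ha haα hc hcγ => hIK a ⟨ha, haα⟩ c ⟨hc, hcγ⟩
    · rintro a ⟨ha, haα⟩ b ⟨hb, hbβ⟩ c ⟨hc, hcγ⟩
      have habc := hIJK a b c ha haα hb hbβ hc hcγ
      simpa only [Submodule.smul_smul_le_iff_mul_mem_colon_s2, Submodule.mem_toAddSubgroup] using
        habsorb a b c ⟨α, haα⟩ ⟨β, hbβ⟩ ⟨γ, hcγ⟩ U hU habc
  · intro h
    refine ⟨hC0, hCgr, ?_⟩
    rintro r s t ⟨α, hr⟩ ⟨β, hs⟩ ⟨γ, ht⟩ U hU hrst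
    rw [smul_smul s t, Submodule.smul_smul_le_iff_mul_mem_colon_s2,
      ← Ideal.span_singleton_le_iff_mem] at hrst
    have hspan : ∀ a b c : R, a ∈ Ideal.span {r} → a ∈ 𝒜 α → b ∈ Ideal.span {s} → b ∈ 𝒜 β →
        c ∈ Ideal.span {t} → c ∈ 𝒜 γ → a • b • c • C ≤ U := by
      intro a b c ha _ hb _ hc _
      rw [smul_smul b c, Submodule.smul_smul_le_iff_mul_mem_colon_s2]
      refine hrst ?_
      rw [← Ideal.span_singleton_mul_span_singleton, ← Ideal.span_singleton_mul_span_singleton]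
      exact Ideal.mul_mem_mul ha (Ideal.mul_mem_mul hb hc)
    rcases h _ _ _ (isGradedIdeal_span_singleton hr) (isGradedIdeal_span_singleton hs)
        (isGradedIdeal_span_singleton ht) α β γ U hU hspan with hst | hrs | hrt
    · exact .inr <| .inl <| hst s t (Ideal.mem_span_singleton_self s) hs
        (Ideal.mem_span_singleton_self t) ht
    · exact .inl <| hrs r s (Ideal.mem_span_singleton_self r) hr
        (Ideal.mem_span_singleton_self s) hs
    · exact .inr <| .inr <| hrt r t (Ideal.mem_span_singleton_self r) hr
        (Ideal.mem_span_singleton_self t) ht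

theorem stmt2 {G : Type*} [Group G] [DecidableEq G] {R : Type*} [CommRing R]
    {M : Type*} [AddCommGroup M] [Module R M]
    (𝒜 : G → AddSubgroup R) (ℳ : G → AddSubgroup M)
    (h𝒜 : IsRingGrading 𝒜) (hℳ : IsModuleGrading 𝒜 ℳ)
    (C : Submodule R M) (hC0 : C ≠ ⊥) (hCgr : IsGradedSubmodule ℳ C) :
    IsGrClassical2AbsorbingSecond 𝒜 ℳ C ↔
      ∀ I J K : Ideal R, IsGradedIdeal 𝒜 I → IsGradedIdeal 𝒜 J → IsGradedIdeal 𝒜 K →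
        ∀ (α β γ : G) (U : Submodule R M), CompletelyGradedIrreducible ℳ U →
          (∀ a b c : R, a ∈ I → a ∈ 𝒜 α → b ∈ J → b ∈ 𝒜 β → c ∈ K → c ∈ 𝒜 γ →
            a • b • c • C ≤ U) →
          ((∀ b c : R, b ∈ J → b ∈ 𝒜 β → c ∈ K → c ∈ 𝒜 γ → b • c • C ≤ U) ∨
            (∀ a b : R, a ∈ I → a ∈ 𝒜 α → b ∈ J → b ∈ 𝒜 β → a • b • C ≤ U) ∨
            (∀ a c : R, a ∈ I → a ∈ 𝒜 α → c ∈ K → c ∈ 𝒜 γ → a • c • C ≤ U)) :=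
  stmt2_general 𝒜 ℳ C hC0 hCgr
end

section
/- Let C be a graded classical 2-absorbing second submodule of M and let I = ⊕_{α∈G} I_α be a graded ideal of R. Then for each α ∈ G, I_α^n·C = I_α^{n+1}·C for all integers n ≥ 2. -/
open Pointwise

/-!
Every graded submodule `N` is cut out by the completely graded irreducible submodules containing
it: a graded submodule maximal among those containing `N` and avoiding `x` is completely graded
irreducible (Zorn). Hence to show `a b C ⊆ I_α³ C` for `a, b ∈ I_α` it suffices to test against
such a `U ⊇ I_α³ C`. There `a a b C`, `a b b C` and `(a + b) a b C` lie in `U`, and since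
`a + b` is again homogeneous of degree `α`, the 2-absorbing property applied to these three
triples forces `a b C ⊆ U`. So `I_α² C = I_α³ C`, and multiplying by `I_α` propagates the
equality to all `n ≥ 2`.
-/

namespace Submodule

variable {R M : Type*} [CommRing R] [AddCommGroup M] [Module R M]

theorem pointwise_smul_le_iff {a : R} {S U : Submodule R M} :
    a • S ≤ U ↔ ∀ m ∈ S, a • m ∈ U := by
  refine ⟨fun h m hm => h (smul_mem_pointwise_smul m a S hm), fun h x hx => ?_⟩
  obtain ⟨m, hm, rfl⟩ := (mem_smul_pointwise_iff_exists x a S).1 hx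
  exact h m hm

end Submodule

section Irreducible

variable {G : Type*} {R : Type*} [CommRing R] {M : Type*} [AddCommGroup M] [Module R M]
  {𝒜 : G → AddSubgroup R} {ℳ : G → AddSubgroup M}

theorem isGradedSubmodule_sSup {S : Set (Submodule R M)}
    (hS : ∀ D ∈ S, IsGradedSubmodule ℳ D) : IsGradedSubmodule ℳ (sSup S) := by
  refine sSup_le fun D hD n hn => Submodule.span_mono ?_ (hS D hD n hn)
  exact fun _ hm => ⟨le_sSup hD hm.1, hm.2⟩

theorem IsGradedSubmodule.exists_completelyGradedIrreducible {N : Submodule R M}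
    (hN : IsGradedSubmodule ℳ N) {x : M} (hx : x ∉ N) :
    ∃ U : Submodule R M, CompletelyGradedIrreducible ℳ U ∧ N ≤ U ∧ x ∉ U := by
  obtain ⟨L, hNL, ⟨hL, hxL⟩, hLmax⟩ :=
    zorn_le_nonempty₀ {L : Submodule R M | IsGradedSubmodule ℳ L ∧ x ∉ L}
      (fun c hcs hchain y hy => ⟨sSup c,
        ⟨isGradedSubmodule_sSup fun D hD => (hcs hD).1, fun hxc => by
          obtain ⟨D, hD, hxD⟩ := (Submodule.mem_sSup_of_directed ⟨y, hy⟩ hchain.directedOn).1 hxc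
          exact (hcs hD).2 hxD⟩,
        fun _ => le_sSup⟩) N ⟨hN, hx⟩
  refine ⟨L, ⟨hL, fun htop => hxL (htop ▸ Submodule.mem_top), fun S hS hLS => ?_⟩, hNL, hxL⟩
  by_contra hLnotS
  -- every member of `S` strictly contains `L`, so by maximality it contains `x`
  have hxS : ∀ D ∈ S, x ∈ D := fun D hD => by
    have hLD : L ≤ D := hLS ▸ sInf_le hD
    by_contra hxD
    exact hLnotS (le_antisymm hLD (hLmax ⟨hS D hD, hxD⟩ hLD) ▸ hD)
  exact hxL (hLS ▸ Submodule.mem_sInf.2 hxS)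

theorem IsGrClassical2AbsorbingSecond.smul_smul_le {C U : Submodule R M}
    (hC : IsGrClassical2AbsorbingSecond 𝒜 ℳ C) (hU : CompletelyGradedIrreducible ℳ U)
    {α : G} {a b : R} (ha : a ∈ 𝒜 α) (hb : b ∈ 𝒜 α)
    (haab : a • a • b • C ≤ U) (habb : a • b • b • C ≤ U) : a • b • C ≤ U := by
  by_contra hab
  have haa : a • a • C ≤ U := by
    rcases hC.2.2 a a b ⟨α, ha⟩ ⟨α, ha⟩ ⟨α, hb⟩ U hU haab with h | h | h
    exacts [h, absurd h hab, absurd h hab]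
  have hbb : b • b • C ≤ U := by
    rcases hC.2.2 a b b ⟨α, ha⟩ ⟨α, hb⟩ ⟨α, hb⟩ U hU habb with h | h | h
    exacts [absurd h hab, h, absurd h hab]
  have hsum : (a + b) • a • b • C ≤ U := by
    simp only [smul_smul, Submodule.pointwise_smul_le_iff] at haab habb ⊢
    intro c hc
    convert U.add_mem (haab c hc) (habb c hc) using 1
    rw [← add_smul]; ring_nf
  apply hab
  rcases hC.2.2 (a + b) a b ⟨α, add_mem ha hb⟩ ⟨α, ha⟩ ⟨α, hb⟩ U hU hsum with h | h | h
  · simp only [smul_smul, Submodule.pointwise_smul_le_iff] at h haa ⊢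
    intro c hc
    convert U.sub_mem (h c hc) (haa c hc) using 1
    rw [← sub_smul]; ring_nf
  · exact h
  · simp only [smul_smul, Submodule.pointwise_smul_le_iff] at h hbb ⊢
    intro c hc
    convert U.sub_mem (h c hc) (hbb c hc) using 1
    rw [← sub_smul]; ring_nf

end Irreducible

section PowSmul

variable {G : Type*} {R : Type*} [CommRing R] {M : Type*} [AddCommGroup M] [Module R M]

/-- The submodule `I_α^k · C`. -/
def gradedPowSmul (𝒜 : G → AddSubgroup R) (I : Ideal R) (α : G) (k : ℕ) (C : Submodule R M) :
    Submodule R M :=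
  Submodule.span R {x : M | ∃ f : Fin k → R, (∀ i, f i ∈ I ∧ f i ∈ 𝒜 α) ∧
    ∃ c ∈ C, x = (∏ i, f i) • c}

variable {𝒜 : G → AddSubgroup R} {I : Ideal R} {α : G} {C : Submodule R M}

theorem gradedPowSmul_succ_le (k : ℕ) :
    gradedPowSmul 𝒜 I α (k + 1) C ≤ gradedPowSmul 𝒜 I α k C := by
  refine Submodule.span_le.2 ?_
  rintro _ ⟨f, hf, c, hc, rfl⟩
  rw [Fin.prod_univ_succ, mul_smul]
  exact Submodule.smul_mem _ _
    (Submodule.subset_span ⟨fun i => f i.succ, fun i => hf i.succ, c, hc, rfl⟩)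

theorem smul_mem_gradedPowSmul_succ {k : ℕ} {r : R} (hrI : r ∈ I) (hrα : r ∈ 𝒜 α) {z : M}
    (hz : z ∈ gradedPowSmul 𝒜 I α k C) : r • z ∈ gradedPowSmul 𝒜 I α (k + 1) C := by
  induction hz using Submodule.span_induction with
  | mem y hy =>
    obtain ⟨f, hf, c, hc, rfl⟩ := hy
    refine Submodule.subset_span ⟨Fin.cons r f, Fin.cases ⟨hrI, hrα⟩ hf, c, hc, ?_⟩
    rw [Fin.prod_univ_succ, Fin.cons_zero, mul_smul]
    simp only [Fin.cons_succ]
  | zero => rw [smul_zero]; exact Submodule.zero_mem _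
  | add y z _ _ hy hz => rw [smul_add]; exact Submodule.add_mem _ hy hz
  | smul t y _ hy => rw [smul_comm]; exact Submodule.smul_mem _ t hy

theorem gradedPowSmul_succ_succ_eq {k : ℕ}
    (h : gradedPowSmul 𝒜 I α k C = gradedPowSmul 𝒜 I α (k + 1) C) :
    gradedPowSmul 𝒜 I α (k + 1) C = gradedPowSmul 𝒜 I α (k + 2) C := by
  refine le_antisymm (Submodule.span_le.2 ?_) (gradedPowSmul_succ_le _)
  rintro _ ⟨f, hf, c, hc, rfl⟩
  rw [Fin.prod_univ_succ, mul_smul]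
  refine smul_mem_gradedPowSmul_succ (hf 0).1 (hf 0).2 (h ▸ Submodule.subset_span ?_)
  exact ⟨fun i => f i.succ, fun i => hf i.succ, c, hc, rfl⟩

end PowSmul

section Graded

variable {G : Type*} [Group G] [DecidableEq G] {R : Type*} [CommRing R]
  {M : Type*} [AddCommGroup M] [Module R M] {𝒜 : G → AddSubgroup R} {ℳ : G → AddSubgroup M}

theorem IsRingGrading.prod_mem_pow (h𝒜 : IsRingGrading 𝒜) {α : G} :
    ∀ {k : ℕ} (f : Fin k → R), (∀ i, f i ∈ 𝒜 α) → ∏ i, f i ∈ 𝒜 (α ^ k)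
  | 0, _, _ => by simpa using h𝒜.one_mem
  | _ + 1, f, hf => by
    rw [Fin.prod_univ_succ, pow_succ']
    exact h𝒜.mul_mem (hf 0) (h𝒜.prod_mem_pow _ fun i => hf i.succ)

theorem isGradedSubmodule_gradedPowSmul (h𝒜 : IsRingGrading 𝒜) (hℳ : IsModuleGrading 𝒜 ℳ)
    {C : Submodule R M} (hC : IsGradedSubmodule ℳ C) (I : Ideal R) (α : G) (k : ℕ) :
    IsGradedSubmodule ℳ (gradedPowSmul 𝒜 I α k C) := by
  refine fun n hn => (Submodule.span_le.2 ?_) hn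
  rintro _ ⟨f, hf, c, hc, rfl⟩
  have hprod := h𝒜.prod_mem_pow f fun i => (hf i).2
  -- `C` is spanned by homogeneous elements, and `∏ f` shifts their degrees by `α ^ k`
  suffices h : {m | m ∈ C ∧ ∃ γ, m ∈ ℳ γ} ⊆
      (Submodule.span R {m | m ∈ gradedPowSmul 𝒜 I α k C ∧ ∃ γ, m ∈ ℳ γ}).comap
        (LinearMap.lsmul R M (∏ i, f i)) from
    Submodule.span_le.2 h (hC c hc)
  rintro y ⟨hyC, γ, hyγ⟩
  exact Submodule.subset_span
    ⟨Submodule.subset_span ⟨f, hf, y, hyC, rfl⟩, α ^ k * γ, hℳ.smul_mem hprod hyγ⟩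

theorem IsGrClassical2AbsorbingSecond.gradedPowSmul_two_eq_three (h𝒜 : IsRingGrading 𝒜)
    (hℳ : IsModuleGrading 𝒜 ℳ) {C : Submodule R M} (hC : IsGrClassical2AbsorbingSecond 𝒜 ℳ C)
    (I : Ideal R) (α : G) : gradedPowSmul 𝒜 I α 2 C = gradedPowSmul 𝒜 I α 3 C := by
  refine le_antisymm (Submodule.span_le.2 ?_) (gradedPowSmul_succ_le 2)
  rintro _ ⟨f, hf, c, hc, rfl⟩
  by_contra hfc
  obtain ⟨U, hU, hcubeU, hfcU⟩ :=
    (isGradedSubmodule_gradedPowSmul h𝒜 hℳ hC.2.1 I α 3).exists_completelyGradedIrreducible hfc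
  have hcube : ∀ u v w : R, u ∈ I ∧ u ∈ 𝒜 α → v ∈ I ∧ v ∈ 𝒜 α → w ∈ I ∧ w ∈ 𝒜 α →
      u • v • w • C ≤ U := fun u v w hu hv hw => by
    simp only [smul_smul, Submodule.pointwise_smul_le_iff]
    intro c hc
    refine hcubeU (Submodule.subset_span ⟨![u, v, w], fun i => ?_, c, hc, ?_⟩)
    · fin_cases i <;> assumption
    · simp [Fin.prod_univ_three, mul_assoc]
  have hab := hC.smul_smul_le hU (hf 0).2 (hf 1).2
    (hcube _ _ _ (hf 0) (hf 0) (hf 1)) (hcube _ _ _ (hf 0) (hf 1) (hf 1))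
  rw [Fin.prod_univ_two, mul_smul] at hfcU
  exact hfcU (hab (Submodule.smul_mem_pointwise_smul _ _ _
    (Submodule.smul_mem_pointwise_smul _ _ _ hc)))

end Graded

theorem stmt3_general {G : Type*} [Group G] [DecidableEq G] {R : Type*} [CommRing R]
    {M : Type*} [AddCommGroup M] [Module R M]
    (𝒜 : G → AddSubgroup R) (ℳ : G → AddSubgroup M)
    (h𝒜 : IsRingGrading 𝒜) (hℳ : IsModuleGrading 𝒜 ℳ)
    (C : Submodule R M) (hC : IsGrClassical2AbsorbingSecond 𝒜 ℳ C)
    (I : Ideal R) (α : G) :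
    ∀ n : ℕ, 2 ≤ n →
      Submodule.span R {x : M | ∃ f : Fin n → R, (∀ i, f i ∈ I ∧ f i ∈ 𝒜 α) ∧
          ∃ c ∈ C, x = (∏ i, f i) • c} =
        Submodule.span R {x : M | ∃ f : Fin (n + 1) → R, (∀ i, f i ∈ I ∧ f i ∈ 𝒜 α) ∧
          ∃ c ∈ C, x = (∏ i, f i) • c} := by
  intro n hn
  change gradedPowSmul 𝒜 I α n C = gradedPowSmul 𝒜 I α (n + 1) C
  induction n, hn using Nat.le_induction with
  | base => exact hC.gradedPowSmul_two_eq_three h𝒜 hℳ I α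
  | succ n _ ih => exact gradedPowSmul_succ_succ_eq ih

theorem stmt3 {G : Type*} [Group G] [DecidableEq G] {R : Type*} [CommRing R]
    {M : Type*} [AddCommGroup M] [Module R M]
    (𝒜 : G → AddSubgroup R) (ℳ : G → AddSubgroup M)
    (h𝒜 : IsRingGrading 𝒜) (hℳ : IsModuleGrading 𝒜 ℳ)
    (C : Submodule R M) (hC : IsGrClassical2AbsorbingSecond 𝒜 ℳ C)
    (I : Ideal R) (hI : IsGradedIdeal 𝒜 I) (α : G) :
    ∀ n : ℕ, 2 ≤ n →
      Submodule.span R {x : M | ∃ f : Fin n → R, (∀ i, f i ∈ I ∧ f i ∈ 𝒜 α) ∧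
          ∃ c ∈ C, x = (∏ i, f i) • c} =
        Submodule.span R {x : M | ∃ f : Fin (n + 1) → R, (∀ i, f i ∈ I ∧ f i ∈ 𝒜 α) ∧
          ∃ c ∈ C, x = (∏ i, f i) • c} :=
  stmt3_general 𝒜 ℳ h𝒜 hℳ C hC I α
end

section
/- Let C be a graded classical 2-absorbing second submodule of M. Then for each completely graded irreducible submodule U of M with C ⊄ U, the ideal (U :_R C) = {r ∈ R : r·C ⊆ U} is a graded 2-absorbing ideal of R. -/
open Pointwise

/-!
For `r ∈ (U :_R C)`, a homogeneous component `r_α` again lies in `(U :_R C)`: on a homogeneous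
`c ∈ C` of degree `δ`, `r_α • c` is the degree-`αδ` component of `r • c ∈ U`, which stays in `U`
because `U` is graded. Since `C` is spanned by such `c`, the colon ideal is graded. The
2-absorbing property is the defining property of `C` read through `r ∈ (U :_R C) ↔ r • C ≤ U`,
and properness is `C ⊄ U`.
-/

open DirectSum

theorem IsGradedIdeal.of_isHomogeneous {ι : Type*} [DecidableEq ι] {R : Type*} [CommRing R]
    {𝒜 : ι → AddSubgroup R} [Decomposition 𝒜] {I : Ideal R} (hI : SetLike.IsHomogeneous 𝒜 I) :
    IsGradedIdeal 𝒜 I := by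
  classical
  intro r hr
  rw [← sum_support_decompose 𝒜 r]
  exact Ideal.sum_mem _ fun β _ => Ideal.subset_span ⟨hI β hr, β, SetLike.coe_mem _⟩

section GradedColon

variable {G : Type*} [Group G] [DecidableEq G] {R : Type*} [CommRing R]
  {M : Type*} [AddCommGroup M] [Module R M]
  {𝒜 : G → AddSubgroup R} {ℳ : G → AddSubgroup M} [Decomposition 𝒜] [Decomposition ℳ]

theorem decompose_smul_of_mem
    (hsm : ∀ ⦃α β : G⦄ ⦃r : R⦄ ⦃m : M⦄, r ∈ 𝒜 α → m ∈ ℳ β → r • m ∈ ℳ (α * β))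
    (r : R) {m : M} {δ : G} (hm : m ∈ ℳ δ) (α : G) :
    (decompose ℳ (r • m) α : M) = (decompose 𝒜 r (α * δ⁻¹) : R) • m := by
  induction r using Decomposition.inductionOn 𝒜 with
  | zero => simp
  | @homogeneous β a =>
    by_cases hβ : β = α * δ⁻¹
    · subst hβ
      rw [decompose_coe, of_eq_same,
        decompose_of_mem_same ℳ (by simpa using hsm a.2 hm)]
    · have hβδ : β * δ ≠ α := fun h => hβ (by rw [← h]; group)
      rw [decompose_coe, of_eq_of_ne _ _ _ (Ne.symm hβ), decompose_of_mem_ne ℳ (hsm a.2 hm) hβδ]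
      simp
  | add a b ha hb => simp [add_smul, ha, hb]

theorem IsGradedSubmodule.isHomogeneous
    (hsm : ∀ ⦃α β : G⦄ ⦃r : R⦄ ⦃m : M⦄, r ∈ 𝒜 α → m ∈ ℳ β → r • m ∈ ℳ (α * β))
    {N : Submodule R M} (hN : IsGradedSubmodule ℳ N) : SetLike.IsHomogeneous ℳ N := by
  intro α n hn
  -- generalised over `r` so that the `smul` case of the span induction goes through
  suffices ∀ x ∈ Submodule.span R {m : M | m ∈ N ∧ ∃ α, m ∈ ℳ α},
      ∀ (r : R) (α : G), (decompose ℳ (r • x) α : M) ∈ N by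
    simpa using this n (hN n hn) 1 α
  intro x hx
  induction hx using Submodule.span_induction with
  | mem y hy =>
    obtain ⟨hyN, δ, hyδ⟩ := hy
    intro r α
    rw [decompose_smul_of_mem hsm r hyδ α]
    exact N.smul_mem _ hyN
  | zero => simp
  | add y z _ _ ihy ihz =>
    intro r α
    simpa [smul_add] using N.add_mem (ihy r α) (ihz r α)
  | smul a y _ ihy =>
    intro r α
    simpa [smul_smul] using ihy (r * a) α

theorem isHomogeneous_colon
    (hsm : ∀ ⦃α β : G⦄ ⦃r : R⦄ ⦃m : M⦄, r ∈ 𝒜 α → m ∈ ℳ β → r • m ∈ ℳ (α * β))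
    {C U : Submodule R M} (hC : IsGradedSubmodule ℳ C) (hU : SetLike.IsHomogeneous ℳ U) :
    SetLike.IsHomogeneous 𝒜 (U.colon C) := by
  intro α r hr
  have hle : C ≤ U.comap ((decompose 𝒜 r α : R) • LinearMap.id : M →ₗ[R] M) := by
    refine fun c hc => Submodule.span_le.mpr ?_ (hC c hc)
    rintro y ⟨hyC, δ, hyδ⟩
    have hcomp := hU (α * δ) (Submodule.mem_colon.mp hr y hyC)
    rw [decompose_smul_of_mem hsm r hyδ, mul_inv_cancel_right] at hcomp
    simpa using hcomp
  exact Submodule.mem_colon.mpr fun c hc => hle hc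

end GradedColon
theorem stmt4 {G : Type*} [Group G] [DecidableEq G] {R : Type*} [CommRing R]
    {M : Type*} [AddCommGroup M] [Module R M]
    (𝒜 : G → AddSubgroup R) (ℳ : G → AddSubgroup M)
    (h𝒜 : IsRingGrading 𝒜) (hℳ : IsModuleGrading 𝒜 ℳ)
    (C : Submodule R M) (hC : IsGrClassical2AbsorbingSecond 𝒜 ℳ C)
    (U : Submodule R M) (hU : CompletelyGradedIrreducible ℳ U) (hCU : ¬ C ≤ U) :
    IsGr2AbsorbingIdeal 𝒜 (U.colon C) := by
  let := h𝒜.isInternal.chooseDecomposition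
  let := hℳ.isInternal.chooseDecomposition
  obtain ⟨-, hCg, hC2⟩ := hC
  refine ⟨fun h => hCU ((Submodule.colon_eq_top_iff_subset _).mp h),
    .of_isHomogeneous (isHomogeneous_colon hℳ.smul_mem hCg (hU.1.isHomogeneous hℳ.smul_mem)), ?_⟩
  intro r s t hr hs ht hrst
  simp only [Submodule.mem_colon_iff_le, mul_smul] at hrst ⊢
  rcases hC2 r s t hr hs ht U hU hrst with h | h | h
  exacts [.inl h, .inr (.inr h), .inr (.inl h)]
end

section
/- Let C be a graded classical 2-absorbing second submodule of M, let I = ⊕_{λ∈G} I_λ be a graded ideal of R, and let λ ∈ G be such that I_λ ⊄ Ann_R(C). Then the submodule I_λ·C is a graded classical 2-absorbing second submodule of M. -/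
open Pointwise

/-! Write `D = I_λ C`. For `x ∈ R` one has `x D ⊆ U` iff `x b ∈ (U :_R C)` for every `b ∈ I_λ`.
Given homogeneous `r, s, t` with `r s t D ⊆ U`, apply the defining property of `C` to the
homogeneous triple `r b, s, t` for each `b ∈ I_λ`. Either `s t C ⊆ U`, and then `s t D ⊆ U`, or
`I_λ` is covered by the two additive subgroups `{b | r s b C ⊆ U}` and `{b | r t b C ⊆ U}`, and
hence lies in one of them. -/

open Submodule

theorem AddSubgroup.forall_mul_mem_or_of_forall_mul_mem_or_s5 {R : Type*} [Ring R] {J : Ideal R}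
    {A : AddSubgroup R} {x y z : R} (h : ∀ a ∈ A, x * a ∈ J ∨ z ∈ J ∨ y * a ∈ J) :
    (∀ a ∈ A, x * a ∈ J) ∨ z ∈ J ∨ ∀ a ∈ A, y * a ∈ J := by
  by_cases hz : z ∈ J
  · exact Or.inr (Or.inl hz)
  have hcover : (A : Set R) ⊆ (J.toAddSubgroup.comap (AddMonoidHom.mulLeft x) : Set R) ∪
      (J.toAddSubgroup.comap (AddMonoidHom.mulLeft y) : Set R) := fun a ha =>
    (h a ha).imp id (·.resolve_left hz)
  rcases AddSubgroupClass.subset_union.mp hcover with hx | hy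
  · exact Or.inl fun a ha => hx ha
  · exact Or.inr (Or.inr fun a ha => hy ha)

theorem Submodule.mem_colon_span_smul_iff {R M : Type*} [CommRing R] [AddCommGroup M] [Module R M]
    {S : Type*} [SetLike S R] {A : S} {C U : Submodule R M} {x : R} :
    x ∈ U.colon (span R {m | ∃ a ∈ A, ∃ c ∈ C, m = a • c}) ↔ ∀ a ∈ A, x * a ∈ U.colon C := by
  simp only [colon_span, mem_colon, Set.mem_ofPred_eq]
  constructor
  · intro h a ha c hc
    rw [mul_smul]
    exact h _ ⟨a, ha, c, hc, rfl⟩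
  · rintro h _ ⟨a, ha, c, hc, rfl⟩
    rw [← mul_smul]
    exact h a ha c hc

section Graded

variable {G : Type*} {R : Type*} [CommRing R] {M : Type*} [AddCommGroup M] [Module R M]
  {𝒜 : G → AddSubgroup R} {ℳ : G → AddSubgroup M}

theorem isGrClassical2AbsorbingSecond_iff_colon {C : Submodule R M} :
    IsGrClassical2AbsorbingSecond 𝒜 ℳ C ↔ C ≠ ⊥ ∧ IsGradedSubmodule ℳ C ∧
      ∀ r s t : R, (∃ α, r ∈ 𝒜 α) → (∃ β, s ∈ 𝒜 β) → (∃ γ, t ∈ 𝒜 γ) →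
        ∀ U : Submodule R M, CompletelyGradedIrreducible ℳ U → r * s * t ∈ U.colon C →
          r * s ∈ U.colon C ∨ s * t ∈ U.colon C ∨ r * t ∈ U.colon C := by
  simp only [IsGrClassical2AbsorbingSecond, smul_smul, ← mem_colon_iff_le, mul_assoc]

theorem IsGradedSubmodule.span_smul [Group G] [DecidableEq G] (hℳ : IsModuleGrading 𝒜 ℳ)
    {A : Set R} (hA : ∀ a ∈ A, ∃ α, a ∈ 𝒜 α) {C : Submodule R M} (hC : IsGradedSubmodule ℳ C) :
    IsGradedSubmodule ℳ (span R {m | ∃ a ∈ A, ∃ c ∈ C, m = a • c}) := by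
  intro n hn
  refine span_le.mpr ?_ hn
  rintro _ ⟨a, ha, c, hc, rfl⟩
  obtain ⟨α, hα⟩ := hA a ha
  refine span_mono ?_ (apply_mem_span_image_of_mem_span (DistribSMul.toLinearMap R M a)
    (hC c hc))
  rintro _ ⟨m, ⟨hm, β, hβ⟩, rfl⟩
  exact ⟨subset_span ⟨a, ha, m, hm, rfl⟩, α * β, hℳ.smul_mem hα hβ⟩

end Graded

theorem stmt5_general {G : Type*} [Group G] [DecidableEq G] {R : Type*} [CommRing R]
    {M : Type*} [AddCommGroup M] [Module R M]
    (𝒜 : G → AddSubgroup R) (ℳ : G → AddSubgroup M)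
    (h𝒜 : IsRingGrading 𝒜) (hℳ : IsModuleGrading 𝒜 ℳ)
    (C : Submodule R M) (hC : IsGrClassical2AbsorbingSecond 𝒜 ℳ C)
    (I : Ideal R) (lam : G)
    (hnl : ∃ a : R, a ∈ I ∧ a ∈ 𝒜 lam ∧ ∃ c ∈ C, a • c ≠ (0 : M)) :
    IsGrClassical2AbsorbingSecond 𝒜 ℳ
      (Submodule.span R {x : M | ∃ a : R, (a ∈ I ∧ a ∈ 𝒜 lam) ∧ ∃ c ∈ C, x = a • c}) := by
  change IsGrClassical2AbsorbingSecond 𝒜 ℳ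
    (span R {x | ∃ a ∈ I.toAddSubgroup ⊓ 𝒜 lam, ∃ c ∈ C, x = a • c})
  rw [isGrClassical2AbsorbingSecond_iff_colon] at hC ⊢
  obtain ⟨-, hCgr, hCabs⟩ := hC
  obtain ⟨a, haI, hal, c, hc, hac⟩ := hnl
  refine ⟨(Submodule.ne_bot_iff _).mpr ⟨a • c, subset_span ⟨a, ⟨haI, hal⟩, c, hc, rfl⟩, hac⟩,
    hCgr.span_smul hℳ fun b hb => ⟨lam, hb.2⟩, ?_⟩
  rintro r s t ⟨α, hr⟩ hs ht U hU hrst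
  simp only [mem_colon_span_smul_iff] at hrst ⊢
  have hcases : ∀ b ∈ I.toAddSubgroup ⊓ 𝒜 lam,
      r * s * b ∈ U.colon C ∨ s * t ∈ U.colon C ∨ r * t * b ∈ U.colon C := by
    intro b hb
    have := hCabs (r * b) s t ⟨α * lam, h𝒜.mul_mem hr hb.2⟩ hs ht U hU
      (by simpa only [mul_right_comm _ b] using hrst b hb)
    simpa only [mul_right_comm r b] using this
  exact (AddSubgroup.forall_mul_mem_or_of_forall_mul_mem_or_s5 hcases).imp_right
    (Or.imp_left fun hst b _ => Ideal.mul_mem_right b _ hst)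

theorem stmt5 {G : Type*} [Group G] [DecidableEq G] {R : Type*} [CommRing R]
    {M : Type*} [AddCommGroup M] [Module R M]
    (𝒜 : G → AddSubgroup R) (ℳ : G → AddSubgroup M)
    (h𝒜 : IsRingGrading 𝒜) (hℳ : IsModuleGrading 𝒜 ℳ)
    (C : Submodule R M) (hC : IsGrClassical2AbsorbingSecond 𝒜 ℳ C)
    (I : Ideal R) (hI : IsGradedIdeal 𝒜 I) (lam : G)
    (hnl : ∃ a : R, a ∈ I ∧ a ∈ 𝒜 lam ∧ ∃ c ∈ C, a • c ≠ (0 : M)) :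
    IsGrClassical2AbsorbingSecond 𝒜 ℳ
      (Submodule.span R {x : M | ∃ a : R, (a ∈ I ∧ a ∈ 𝒜 lam) ∧ ∃ c ∈ C, x = a • c}) :=
  stmt5_general 𝒜 ℳ h𝒜 hℳ C hC I lam hnl
end

section
/- Let M₁, M₂ be graded R-modules and let f : M₁ → M₂ be a graded monomorphism. If C₁ is a graded strongly classical 2-absorbing second submodule of M₁, then f(C₁) is a graded strongly classical 2-absorbing second submodule of M₂. -/
open Pointwise

/-! A submodule `U` is completely graded irreducible exactly when it is graded and some `w ∉ U`
lies in every graded submodule strictly above `U`. For such `U ≤ M₂` with `f⁻¹(U) ≠ ⊤`, every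
graded `D` strictly above `f⁻¹(U)` contains a homogeneous `x` with `f x ∉ U`, so `w ∈ U + R·f x`
gives `z ∈ D` with `w - f z ∈ U`; any one such `z₀` (taking `D = ⊤`) then lies in every such `D`
but not in `f⁻¹(U)`, so `f⁻¹(U)` is completely graded irreducible. Since `f(X) ≤ U` iff
`X ≤ f⁻¹(U)` and `f(r • X) = r • f(X)`, the absorbing condition for `f(C₁)` against `U₁, U₂, U₃`
is the one for `C₁` against those preimages that are not `⊤`. -/

open DirectSum

section GradedSubmodule

variable {G : Type*} {R : Type*} [CommRing R] {M : Type*} [AddCommGroup M] [Module R M]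
  {ℳ : G → AddSubgroup M}

theorem isGradedSubmodule_span {S : Set M} (hS : ∀ m ∈ S, ∃ α, m ∈ ℳ α) :
    IsGradedSubmodule ℳ (Submodule.span R S) := by
  intro n hn
  refine Submodule.span_mono (fun m hm => ?_) hn
  exact ⟨Submodule.subset_span hm, hS m hm⟩

theorem IsGradedSubmodule.sup {A B : Submodule R M} (hA : IsGradedSubmodule ℳ A)
    (hB : IsGradedSubmodule ℳ B) : IsGradedSubmodule ℳ (A ⊔ B) := by
  have hmono : ∀ C ≤ A ⊔ B, Submodule.span R {m | m ∈ C ∧ ∃ α, m ∈ ℳ α} ≤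
      Submodule.span R {m | m ∈ A ⊔ B ∧ ∃ α, m ∈ ℳ α} :=
    fun C hC => Submodule.span_mono fun m hm => ⟨hC hm.1, hm.2⟩
  intro n hn
  obtain ⟨a, ha, b, hb, rfl⟩ := Submodule.mem_sup.1 hn
  exact add_mem (hmono A le_sup_left (hA a ha)) (hmono B le_sup_right (hB b hb))

theorem IsGradedSubmodule.exists_homogeneous_notMem {D V : Submodule R M}
    (hD : IsGradedSubmodule ℳ D) (hDV : ¬D ≤ V) : ∃ x ∈ D, x ∉ V ∧ ∃ α, x ∈ ℳ α := by
  by_contra! h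
  obtain ⟨y, hyD, hyV⟩ := SetLike.not_le_iff_exists.1 hDV
  refine hyV (Submodule.span_le.2 ?_ (hD y hyD))
  rintro m ⟨hmD, α, hmα⟩
  by_contra hmV
  exact h m hmD hmV α hmα

theorem completelyGradedIrreducible_iff {U : Submodule R M} :
    CompletelyGradedIrreducible ℳ U ↔ IsGradedSubmodule ℳ U ∧
      ∃ w ∉ U, ∀ D : Submodule R M, IsGradedSubmodule ℳ D → U < D → w ∈ D := by
  constructor
  · rintro ⟨hU, -, hirr⟩
    set S := {D : Submodule R M | IsGradedSubmodule ℳ D ∧ U < D}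
    have hUS : U < sInf S := by
      refine lt_of_le_of_ne (le_sInf fun D hD => hD.2.le) fun h => ?_
      exact (hirr S (fun D hD => hD.1) h).2.ne rfl
    obtain ⟨w, hw, hwU⟩ := SetLike.exists_of_lt hUS
    exact ⟨hU, w, hwU, fun D hD hUD => Submodule.mem_sInf.1 hw D ⟨hD, hUD⟩⟩
  · rintro ⟨hU, w, hwU, hw⟩
    refine ⟨hU, by rintro rfl; exact hwU Submodule.mem_top, fun S hS hUS => ?_⟩
    by_contra hUnS
    refine hwU (hUS ▸ Submodule.mem_sInf.2 fun D hD => hw D (hS D hD) ?_)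
    exact lt_of_le_of_ne (hUS ▸ sInf_le hD) fun h => hUnS (h ▸ hD)

variable [DecidableEq G] [Decomposition ℳ]

theorem IsGradedSubmodule.of_isHomogeneous {N : Submodule R M}
    (hN : SetLike.IsHomogeneous ℳ N) : IsGradedSubmodule ℳ N := by
  classical
  intro n hn
  rw [← sum_support_decompose ℳ n]
  exact Submodule.sum_mem _ fun i _ =>
    Submodule.subset_span ⟨hN i hn, i, (decompose ℳ n i).2⟩

variable [Group G] {𝒜 : G → AddSubgroup R}

theorem decompose_smul_of_mem_s14 (hℳ : IsModuleGrading 𝒜 ℳ) {r : R} {β : G} (hr : r ∈ 𝒜 β)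
    (x : M) (γ : G) : (decompose ℳ (r • x) γ : M) = r • (decompose ℳ x (β⁻¹ * γ) : M) := by
  induction x using Decomposition.inductionOn ℳ with
  | zero => simp
  | add x y hx hy =>
    simp only [smul_add, decompose_add, DirectSum.add_apply, AddSubgroup.coe_add, hx, hy]
  | @homogeneous δ m =>
    by_cases hγ : β * δ = γ
    · subst hγ
      rw [decompose_of_mem_same ℳ (hℳ.smul_mem hr m.2), inv_mul_cancel_left,
        decompose_coe, of_eq_same]
    · rw [decompose_of_mem_ne ℳ (hℳ.smul_mem hr m.2) hγ, decompose_coe,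
        of_eq_of_ne _ _ _ (by rintro rfl; exact hγ (mul_inv_cancel_left β γ)),
        ZeroMemClass.coe_zero, smul_zero]

theorem IsGradedSubmodule.isHomogeneous_s14 [Decomposition 𝒜] (hℳ : IsModuleGrading 𝒜 ℳ)
    {N : Submodule R M} (hN : IsGradedSubmodule ℳ N) : SetLike.IsHomogeneous ℳ N := by
  suffices h : ∀ x ∈ Submodule.span R {m | m ∈ N ∧ ∃ α, m ∈ ℳ α}, ∀ γ,
      (decompose ℳ x γ : M) ∈ N from fun γ n hn => h n (hN n hn) γ
  intro x hx
  induction hx using Submodule.span_induction with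
  | mem m hm =>
    obtain ⟨hmN, α, hmα⟩ := hm
    intro γ
    by_cases hαγ : α = γ
    · rwa [decompose_of_mem_same ℳ (hαγ ▸ hmα)]
    · rw [decompose_of_mem_ne ℳ hmα hαγ]; exact N.zero_mem
  | zero => simp
  | add x y _ _ hx hy => intro γ; simpa using N.add_mem (hx γ) (hy γ)
  | smul r x _ hx =>
    induction r using Decomposition.inductionOn 𝒜 with
    | zero => simp
    | add r s hr hs => intro γ; simpa [add_smul] using N.add_mem (hr γ) (hs γ)
    | @homogeneous β r =>
      intro γ
      rw [decompose_smul_of_mem_s14 hℳ r.2]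
      exact N.smul_mem r (hx _)

end GradedSubmodule

section GradedMap

variable {G : Type*} {R : Type*} [CommRing R]
  {M₁ M₂ : Type*} [AddCommGroup M₁] [Module R M₁] [AddCommGroup M₂] [Module R M₂]
  {ℳ₁ : G → AddSubgroup M₁} {ℳ₂ : G → AddSubgroup M₂} {f : M₁ →ₗ[R] M₂}

theorem IsGradedSubmodule.map (hf : ∀ α : G, ∀ m ∈ ℳ₁ α, f m ∈ ℳ₂ α) {C : Submodule R M₁}
    (hC : IsGradedSubmodule ℳ₁ C) : IsGradedSubmodule ℳ₂ (C.map f) := by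
  rintro _ ⟨m, hm, rfl⟩
  have hfm : f m ∈ (Submodule.span R {x | x ∈ C ∧ ∃ α, x ∈ ℳ₁ α}).map f := ⟨m, hC m hm, rfl⟩
  rw [Submodule.map_span] at hfm
  refine Submodule.span_mono ?_ hfm
  rintro _ ⟨y, ⟨hyC, α, hyα⟩, rfl⟩
  exact ⟨⟨y, hyC, rfl⟩, α, hf α y hyα⟩

theorem exists_sub_mem_of_not_le_comap (hf : ∀ α : G, ∀ m ∈ ℳ₁ α, f m ∈ ℳ₂ α)
    {U : Submodule R M₂} (hU : IsGradedSubmodule ℳ₂ U) {w : M₂}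
    (hw : ∀ D : Submodule R M₂, IsGradedSubmodule ℳ₂ D → U < D → w ∈ D)
    {D : Submodule R M₁} (hD : IsGradedSubmodule ℳ₁ D) (hDU : ¬D ≤ U.comap f) :
    ∃ z ∈ D, w - f z ∈ U := by
  obtain ⟨x, hxD, hxU, α, hxα⟩ := hD.exists_homogeneous_notMem hDU
  have hgr : IsGradedSubmodule ℳ₂ (U ⊔ Submodule.span R {f x}) :=
    hU.sup (isGradedSubmodule_span fun _ hm => ⟨α, (Set.mem_singleton_iff.1 hm) ▸ hf α x hxα⟩)
  have hlt : U < U ⊔ Submodule.span R {f x} :=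
    SetLike.lt_iff_le_and_exists.2
      ⟨le_sup_left, f x, Submodule.mem_sup_right (Submodule.mem_span_singleton_self _), hxU⟩
  obtain ⟨u, hu, y, hy, rfl⟩ := Submodule.mem_sup.1 (hw _ hgr hlt)
  obtain ⟨r, rfl⟩ := Submodule.mem_span_singleton.1 hy
  exact ⟨r • x, D.smul_mem r hxD, by rwa [map_smul, add_sub_cancel_right]⟩

variable [DecidableEq G] [Decomposition ℳ₁] [Decomposition ℳ₂]

theorem decompose_map_of_graded (hf : ∀ α : G, ∀ m ∈ ℳ₁ α, f m ∈ ℳ₂ α) (x : M₁) (γ : G) :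
    f (decompose ℳ₁ x γ) = decompose ℳ₂ (f x) γ := by
  induction x using Decomposition.inductionOn ℳ₁ with
  | zero => simp
  | add x y hx hy => simp only [decompose_add, DirectSum.add_apply, AddSubgroup.coe_add,
      map_add, hx, hy]
  | @homogeneous δ m =>
    by_cases hδ : δ = γ
    · subst hδ
      rw [decompose_of_mem_same ℳ₁ m.2, decompose_of_mem_same ℳ₂ (hf δ m m.2)]
    · rw [decompose_of_mem_ne ℳ₁ m.2 hδ, decompose_of_mem_ne ℳ₂ (hf δ m m.2) hδ, map_zero]

theorem SetLike.IsHomogeneous.comap (hf : ∀ α : G, ∀ m ∈ ℳ₁ α, f m ∈ ℳ₂ α)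
    {U : Submodule R M₂} (hU : SetLike.IsHomogeneous ℳ₂ U) :
    SetLike.IsHomogeneous ℳ₁ (U.comap f) := fun γ x hx => by
  simpa only [Submodule.mem_comap, decompose_map_of_graded hf] using hU γ hx

variable [Group G] {𝒜 : G → AddSubgroup R} [Decomposition 𝒜]

theorem IsGradedSubmodule.comap (hℳ₂ : IsModuleGrading 𝒜 ℳ₂)
    (hf : ∀ α : G, ∀ m ∈ ℳ₁ α, f m ∈ ℳ₂ α) {U : Submodule R M₂}
    (hU : IsGradedSubmodule ℳ₂ U) : IsGradedSubmodule ℳ₁ (U.comap f) :=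
  .of_isHomogeneous (SetLike.IsHomogeneous.comap hf (hU.isHomogeneous_s14 hℳ₂))

theorem CompletelyGradedIrreducible.comap (hℳ₂ : IsModuleGrading 𝒜 ℳ₂)
    (hf : ∀ α : G, ∀ m ∈ ℳ₁ α, f m ∈ ℳ₂ α) {U : Submodule R M₂}
    (hU : CompletelyGradedIrreducible ℳ₂ U) (hUf : U.comap f ≠ ⊤) :
    CompletelyGradedIrreducible ℳ₁ (U.comap f) := by
  obtain ⟨hUgr, w, hwU, hw⟩ := completelyGradedIrreducible_iff.1 hU
  have htop : IsGradedSubmodule ℳ₁ (⊤ : Submodule R M₁) :=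
    .of_isHomogeneous fun _ _ _ => Submodule.mem_top
  obtain ⟨z₀, -, hz₀⟩ := exists_sub_mem_of_not_le_comap hf hUgr hw htop (by rwa [top_le_iff])
  refine completelyGradedIrreducible_iff.2
    ⟨hUgr.comap hℳ₂ hf, z₀, fun hz₀U => hwU ?_, fun D hD hUD => ?_⟩
  · simpa using U.add_mem hz₀ hz₀U
  · obtain ⟨z, hzD, hz⟩ := exists_sub_mem_of_not_le_comap hf hUgr hw hD hUD.not_ge
    have hz₀z : z₀ - z ∈ U.comap f := by simpa using U.sub_mem hz hz₀
    simpa using D.add_mem (hUD.le hz₀z) hzD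

end GradedMap

theorem inf_inf_eq_top_or_exists {α : Type*} [SemilatticeInf α] [OrderTop α] {P : α → Prop}
    {a b c : α} (ha : a = ⊤ ∨ P a) (hb : b = ⊤ ∨ P b) (hc : c = ⊤ ∨ P c) :
    a ⊓ b ⊓ c = ⊤ ∨ ∃ x y z, P x ∧ P y ∧ P z ∧ x ⊓ y ⊓ z = a ⊓ b ⊓ c := by
  rcases ha with rfl | ha <;> rcases hb with rfl | hb <;> rcases hc with rfl | hc
  · simp
  · exact .inr ⟨c, c, c, hc, hc, hc, by simp⟩
  · exact .inr ⟨b, b, b, hb, hb, hb, by simp⟩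
  · exact .inr ⟨b, b, c, hb, hb, hc, by simp⟩
  · exact .inr ⟨a, a, a, ha, ha, ha, by simp⟩
  · exact .inr ⟨a, a, c, ha, ha, hc, by simp⟩
  · exact .inr ⟨a, b, b, ha, hb, hb, by simp⟩
  · exact .inr ⟨a, b, c, ha, hb, hc, rfl⟩

theorem stmt14 {G : Type*} [Group G] [DecidableEq G] {R : Type*} [CommRing R]
    {M₁ M₂ : Type*} [AddCommGroup M₁] [Module R M₁] [AddCommGroup M₂] [Module R M₂]
    (𝒜 : G → AddSubgroup R) (ℳ₁ : G → AddSubgroup M₁) (ℳ₂ : G → AddSubgroup M₂)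
    (h𝒜 : IsRingGrading 𝒜) (hℳ₁ : IsModuleGrading 𝒜 ℳ₁)
    (hℳ₂ : IsModuleGrading 𝒜 ℳ₂)
    (f : M₁ →ₗ[R] M₂) (hfgr : ∀ α : G, ∀ m ∈ ℳ₁ α, f m ∈ ℳ₂ α)
    (hfinj : Function.Injective f)
    (C₁ : Submodule R M₁) (hC₁ : IsGrStronglyClassical2AbsorbingSecond 𝒜 ℳ₁ C₁) :
    IsGrStronglyClassical2AbsorbingSecond 𝒜 ℳ₂ (Submodule.map f C₁) := by
  let _ := h𝒜.isInternal.chooseDecomposition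
  let _ := hℳ₁.isInternal.chooseDecomposition
  let _ := hℳ₂.isInternal.chooseDecomposition
  obtain ⟨hne, hgr, habs⟩ := hC₁
  have hcomap : ∀ U, CompletelyGradedIrreducible ℳ₂ U →
      U.comap f = ⊤ ∨ CompletelyGradedIrreducible ℳ₁ (U.comap f) :=
    fun U hU => or_iff_not_imp_left.2 (hU.comap hℳ₂ hfgr)
  have hne' : C₁.map f ≠ ⊥ := by
    rwa [Ne, ← Submodule.map_bot f, (Submodule.map_injective_of_injective hfinj).eq_iff]
  refine ⟨hne', hgr.map hfgr, fun r s t hr hs ht U₁ U₂ U₃ hU₁ hU₂ hU₃ hrst => ?_⟩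
  simp only [← Submodule.map_pointwise_smul, Submodule.map_le_iff_le_comap,
    Submodule.comap_inf] at hrst ⊢
  rcases inf_inf_eq_top_or_exists (hcomap U₁ hU₁) (hcomap U₂ hU₂) (hcomap U₃ hU₃) with
    htop | ⟨W₁, W₂, W₃, hW₁, hW₂, hW₃, hW⟩
  · simp [htop]
  · rw [← hW] at hrst ⊢
    exact habs r s t hr hs ht W₁ W₂ W₃ hW₁ hW₂ hW₃ hrst
end
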